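/- Let T > R > P > S, 2R > T + S, R > 0 and H ≤ 0, and let σ and τ be strategies in the N-round FTPD game such that each player's total payoff when σ plays against τ equals N·R (so σ is a cooperative strategy). Then σ plays C on every all-cooperative opponent history shorter than the game: for every k with 0 ≤ k < N, σ applied to the list consisting of k copies of C equals C. (A cooperative player will Wait or Defect only if his opponent Defected or Waited at an earlier stage of the game.) -/
import Mathlib


/-- Moves of the FTPD stage game: Cooperate, Defect, Wait. -/
inductive Move where
  | C | D | W
deriving DecidableEq

open Move

/-- The row player's stage payoff in the FTPD game. -/
def u (T R P S H : ℝ) : Move → Move → ℝ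
  | C, C => R
  | C, D => S
  | D, C => T
  | D, D => P
  | W, W => H
  | W, _ => 0
  | _, W => 0

/-- A strategy maps the opponent's past moves to a move. -/
def Strategy : Type := List Move → Move

/-- `hists σ τ k = ([a_1, …, a_k], [b_1, …, b_k])`: the histories of moves of
the two players after `k` rounds, where `a_i = σ [b_1, …, b_{i-1}]` and
`b_i = τ [a_1, …, a_{i-1}]`. -/
def hists (σ τ : Strategy) : ℕ → List Move × List Move
  | 0 => ([], [])
  | k + 1 =>
    let h := hists σ τ k
    (h.1 ++ [σ h.2], h.2 ++ [τ h.1])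

/-- `moveA σ τ k = a_{k+1}`, the first player's move in round `k+1`. -/
def moveA (σ τ : Strategy) (k : ℕ) : Move := σ (hists σ τ k).2

/-- `moveB σ τ k = b_{k+1}`, the second player's move in round `k+1`. -/
def moveB (σ τ : Strategy) (k : ℕ) : Move := τ (hists σ τ k).1

/-- The total payoff of the first player (playing `σ`) over `N` rounds. -/
def payoffA (T R P S H : ℝ) (σ τ : Strategy) (N : ℕ) : ℝ :=
  ∑ k ∈ Finset.range N, u T R P S H (moveA σ τ k) (moveB σ τ k)

/-- The total payoff of the second player (playing `τ`) over `N` rounds. -/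
def payoffB (T R P S H : ℝ) (σ τ : Strategy) (N : ℕ) : ℝ :=
  ∑ k ∈ Finset.range N, u T R P S H (moveB σ τ k) (moveA σ τ k)

lemma pair_le (T R P S H : ℝ) (hTR : T > R) (hRP : R > P) (hPS : P > S)
    (h2R : 2 * R > T + S) (hR : R > 0) (hH : H ≤ 0) (a b : Move) :
    u T R P S H a b + u T R P S H b a ≤ 2 * R := by
  cases a <;> cases b <;> simp [u] <;> linarith

lemma pair_eq (T R P S H : ℝ) (hTR : T > R) (hRP : R > P) (hPS : P > S)
    (h2R : 2 * R > T + S) (hR : R > 0) (hH : H ≤ 0) (a b : Move)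
    (h : u T R P S H a b + u T R P S H b a = 2 * R) : a = C ∧ b = C := by
  cases a <;> cases b <;> simp_all [u] <;> linarith

/-- A cooperative strategy (one achieving the joint payoff `N·R` against its
equilibrium counterpart) plays `C` on every all-`C` opponent history shorter
than the game: a cooperative player Waits or Defects only if his opponent
Defected or Waited at an earlier stage. -/
theorem cooperative_plays_C_on_all_C_history (T R P S H : ℝ)
    (hTR : T > R) (hRP : R > P) (hPS : P > S) (h2R : 2 * R > T + S)
    (hR : R > 0) (hH : H ≤ 0) (N : ℕ) (σ τ : Strategy)
    (hA : payoffA T R P S H σ τ N = N * R)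
    (hB : payoffB T R P S H σ τ N = N * R) :
    ∀ k < N, σ (List.replicate k C) = C := by
  have hsum : ∑ k ∈ Finset.range N,
      (u T R P S H (moveA σ τ k) (moveB σ τ k)
        + u T R P S H (moveB σ τ k) (moveA σ τ k)) = ∑ _k ∈ Finset.range N, 2 * R := by
    rw [Finset.sum_add_distrib]
    simp only [Finset.sum_const, Finset.card_range, nsmul_eq_mul]
    have := hA; have := hB
    unfold payoffA at hA; unfold payoffB at hB
    rw [hA, hB]; ring
  have key : ∀ k ∈ Finset.range N,
      u T R P S H (moveA σ τ k) (moveB σ τ k)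
        + u T R P S H (moveB σ τ k) (moveA σ τ k) = 2 * R := by
    intro k hk
    exact ((Finset.sum_eq_sum_iff_of_le (fun i _ =>
      pair_le T R P S H hTR hRP hPS h2R hR hH _ _)).1 hsum k hk)
  have moves : ∀ k < N, moveA σ τ k = C ∧ moveB σ τ k = C := by
    intro k hk
    exact pair_eq T R P S H hTR hRP hPS h2R hR hH _ _
      (key k (Finset.mem_range.2 hk))
  have hist : ∀ k ≤ N, hists σ τ k = (List.replicate k C, List.replicate k C) := by
    intro k
    induction k with
    | zero => intro _; rfl
    | succ n ih =>
      intro hn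
      have hn' : n < N := Nat.lt_of_succ_le hn
      have ihn := ih (Nat.le_of_lt hn')
      have hm := moves n hn'
      show ((hists σ τ n).1 ++ [σ (hists σ τ n).2],
        (hists σ τ n).2 ++ [τ (hists σ τ n).1]) = _
      have ha : σ (hists σ τ n).2 = C := hm.1
      have hb : τ (hists σ τ n).1 = C := hm.2
      rw [ha, hb, ihn]
      simp [List.replicate_succ']
  intro k hk
  have := (moves k hk).1
  unfold moveA at this
  rw [hist k (Nat.le_of_lt hk)] at this
  exact this
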